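/- arXiv:1909.04650 — 5 statements merged into one kernel-verified Lean document; each statement's English description precedes it below -/
import Mathlib

section
/- Let w ∈ P_n be nonzero with w_i − w_{i+1} ≤ 1 for all i = 1,…,n−1. Then there exists D such that for all d ≥ D, X_w^d equals the set of all C ∈ P_n with |C| = d·|w| and C_i + C_{i+1} + ⋯ + C_n ≥ d·(w_i + w_{i+1} + ⋯ + w_n) for all i = 1,…,n (that is, the set of partitions of size d·|w| dominated by d·w). -/
open MvPolynomial

/-- `PartitionOn n x` : `x` is a weakly decreasing sequence of naturals (0-based
indexing, so `x 0` is the first part `x_1`) vanishing from index `n` on; this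
encodes a partition in `P_n ⊆ ℤ^n_{≥0}`. -/
def PartitionOn (n : ℕ) (x : ℕ → ℕ) : Prop :=
  (∀ i j : ℕ, i ≤ j → x j ≤ x i) ∧ ∀ i : ℕ, n ≤ i → x i = 0

/-- A partition: a weakly decreasing, eventually zero sequence of naturals. -/
def IsPartitionF (x : ℕ → ℕ) : Prop :=
  (∀ i j : ℕ, i ≤ j → x j ≤ x i) ∧ ∃ n : ℕ, ∀ i : ℕ, n ≤ i → x i = 0

/-- The conjugate partition (1-based index): `conj x i = #{j : x_j ≥ i}`. -/
noncomputable def conj (x : ℕ → ℕ) (i : ℕ) : ℕ :=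
  Set.ncard { j : ℕ | i ≤ x j }

/-- The truncation `x(c)`, whose parts are `min (x i) c`. -/
def trunc (x : ℕ → ℕ) (c : ℕ) : ℕ → ℕ := fun i => min (x i) c

/-- The rectangular partition `(b^a)`: `a` parts equal to `b`. -/
def rect (a b : ℕ) : ℕ → ℕ := fun i => if i < a then b else 0

/-- The size `|x| = x_1 + ⋯ + x_n` of a partition supported in the first `n` indices. -/
def psize (n : ℕ) (x : ℕ → ℕ) : ℕ := ∑ i ∈ Finset.range n, x i

/-- The set `Z(X)` : pairs `(z, l)` with `z ∈ P_n`, `l ≥ 0` such that, writing `c = z_1`: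
(1) there is `x ∈ X` with `x(c) ≤ z` and `x'_{c+1} ≤ l+1`, and
(2) every `x ∈ X` with `x(c) ≤ z` and `x'_{c+1} ≤ l+1` has `x'_{c+1} = l+1`. -/
noncomputable def ZX (n : ℕ) (X : Set (ℕ → ℕ)) : Set ((ℕ → ℕ) × ℕ) :=
  { zl | PartitionOn n zl.1 ∧
    (∃ x ∈ X, trunc x (zl.1 0) ≤ zl.1 ∧ conj x (zl.1 0 + 1) ≤ zl.2 + 1) ∧
    ∀ x ∈ X, trunc x (zl.1 0) ≤ zl.1 → conj x (zl.1 0 + 1) ≤ zl.2 + 1 →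
      conj x (zl.1 0 + 1) = zl.2 + 1 }

/-- The monomial `e^u = e_1^{u_1} ⋯ e_n^{u_n}` in `S = k[e_1, …, e_n]`. -/
noncomputable def mon (k : Type*) [Field k] (n : ℕ) (u : ℕ → ℕ) : MvPolynomial (Fin n) k :=
  ∏ i : Fin n, (X i : MvPolynomial (Fin n) k) ^ u (i : ℕ)

/-- The ideal `I_x` generated by the `S_n`-orbit of the monomial `e^x`. -/
noncomputable def Ipart (k : Type*) [Field k] (n : ℕ) (x : ℕ → ℕ) :
    Ideal (MvPolynomial (Fin n) k) :=
  Ideal.span { f | ∃ σ : Equiv.Perm (Fin n),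
    f = ∏ i : Fin n, (X i : MvPolynomial (Fin n) k) ^ x ((σ i : Fin n) : ℕ) }

/-- The ideal `I_X = Σ_{x ∈ X} I_x`. -/
noncomputable def IXset (k : Type*) [Field k] (n : ℕ) (Xs : Set (ℕ → ℕ)) :
    Ideal (MvPolynomial (Fin n) k) :=
  ⨆ x ∈ Xs, Ipart k n x

/-- `succ(z,l) = {x ∈ P_n : x ≥ z and x_i > z_i for some i > l}` (1-based `i > l`
corresponds to 0-based index `≥ l`). -/
def succSet (n l : ℕ) (z : ℕ → ℕ) : Set (ℕ → ℕ) :=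
  { x | PartitionOn n x ∧ (∀ i, z i ≤ x i) ∧ ∃ i, l ≤ i ∧ z i < x i }

/-- `Y_{z,l} = {((z_1+1)^{l+1})} ∪ {((z_i+1)^i) : l+1 < i ≤ n, z_{i-1} > z_i}`
(here `i = m+2` in 1-based indexing). -/
def Yset (n : ℕ) (z : ℕ → ℕ) (l : ℕ) : Set (ℕ → ℕ) :=
  {rect (l+1) (z 0 + 1)} ∪
    { y | ∃ m : ℕ, l ≤ m ∧ m + 2 ≤ n ∧ z (m+1) < z m ∧ y = rect (m+2) (z (m+1) + 1) }

/-- `Y'_{z,l} = {((z_i+1)^i) : l+1 < i ≤ n, z_{i-1} > z_i}`. -/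
def Y'set (n : ℕ) (z : ℕ → ℕ) (l : ℕ) : Set (ℕ → ℕ) :=
  { y | ∃ m : ℕ, l ≤ m ∧ m + 2 ≤ n ∧ z (m+1) < z m ∧ y = rect (m+2) (z (m+1) + 1) }

/-- An ideal `I` is symmetric shifted if for every monomial `e^x ∈ I` with `x ∈ P_n`
and every `1 < k ≤ n` (0-based `0 < j < n`) with `x_1 > x_k`, one has `e^x · e_k/e_1 ∈ I`. -/
def SymShifted (k : Type*) [Field k] (n : ℕ) (I : Ideal (MvPolynomial (Fin n) k)) : Prop :=
  ∀ x : ℕ → ℕ, PartitionOn n x → mon k n x ∈ I →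
    ∀ j : ℕ, 0 < j → j < n → x j < x 0 →
      mon k n (fun i => if i = 0 then x 0 - 1 else if i = j then x j + 1 else x i) ∈ I

/-- The partitioning problem `BP(d, C; w)` is `r`-feasible: the multiset of `d` copies of
each of `w_1, …, w_n` (balls indexed by `Fin d × Fin n`, ball `(j,i)` of weight `w_i`)
can be distributed into bins `B_1, …, B_n` of exactly `d` balls each so that
`w(B_i) ≤ C_i` for all `i = r+1, …, n` (0-based bins `≥ r`). -/
def RFeasible (n d r : ℕ) (C w : ℕ → ℕ) : Prop :=
  ∃ A : Fin d × Fin n → Fin n,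
    (∀ b : Fin n, (Finset.univ.filter fun p => A p = b).card = d) ∧
    ∀ b : Fin n, r ≤ (b : ℕ) →
      (∑ p ∈ Finset.univ.filter (fun p => A p = b), w ((p.2 : Fin n) : ℕ)) ≤ C (b : ℕ)

/-- `X_w^d = {x ∈ P_n : x = σ_1(w) + ⋯ + σ_d(w) for some σ_1, …, σ_d ∈ S_n}`. -/
def XwPow (n d : ℕ) (w : ℕ → ℕ) : Set (ℕ → ℕ) :=
  { x | PartitionOn n x ∧ ∃ σ : Fin d → Equiv.Perm (Fin n),
      ∀ i : Fin n, x (i : ℕ) = ∑ j : Fin d, w ((σ j i : Fin n) : ℕ) }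

/-- `Y_n`: the elements of `Y` with at most `n` nonzero parts, regarded in `P_n`. -/
def restr (Y : Set (ℕ → ℕ)) (n : ℕ) : Set (ℕ → ℕ) :=
  { x ∈ Y | ∀ i, n ≤ i → x i = 0 }

/-!
Every `x ∈ X_w^d` is dominated by `d • w`: the first `t` parts of each `σ_j(w)` sum to at most
`w_1 + ⋯ + w_t` (rearrangement inequality).

For the converse, forget that the rows of the `d × n` array `(w_{σ_j(t)})` are permutations of `w`
and only remember its columns, a *filling*: `n` columns of `d` entries using each part of `w`
exactly `d` times. By Hall's theorem a filling contains a transversal of the parts of `w`, so by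
induction on `d` its rows can be rearranged into permutations of `w`.

Since consecutive parts of `w` differ by at most one, every value between two parts is a part,
and for `d > n` some column holds it twice. Swapping adjacent values `r + 1 ↔ r` between columns
along such repeated values moves one unit from any column to any column with a smaller sum.
Finally, every partition dominated by `d • w` is obtained from `d • w` by such unit moves,
by induction on the total gap between the partial sums of `d • w` and of the partition.
-/

open Finset

lemma exists_eq_of_drop_le_one {f : ℕ → ℕ} {m k r : ℕ} (hmk : m ≤ k)
    (hf : ∀ i, m ≤ i → i < k → f i ≤ f (i + 1) + 1) (hk : f k ≤ r) (hm : r ≤ f m) :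
    ∃ i, m ≤ i ∧ i ≤ k ∧ f i = r := by
  induction k, hmk using Nat.le_induction generalizing r with
  | base => exact ⟨m, le_rfl, le_rfl, by omega⟩
  | succ k hmk ih =>
    by_cases hkr : f k ≤ r
    · obtain ⟨i, hmi, hik, hi⟩ := ih (fun i h₁ h₂ => hf i h₁ (by omega)) hkr hm
      exact ⟨i, hmi, by omega, hi⟩
    · exact ⟨k + 1, by omega, le_rfl, by have := hf k hmk (by omega); omega⟩

theorem Multiset.exists_lt_of_sum_lt_of_card_eq {s t : Multiset ℕ}
    (hcard : Multiset.card s = Multiset.card t) (hlt : s.sum < t.sum) :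
    ∃ a ∈ t, ∃ b ∈ s, b < a := by
  by_contra! h
  have ht : t.sum ≤ Multiset.card t • t.sup := t.sum_le_card_nsmul _ fun a ha => le_sup ha
  have hs : Multiset.card s • t.sup ≤ s.sum :=
    card_nsmul_le_sum fun b hb => Multiset.sup_le.2 fun a ha => h a ha b hb
  rw [hcard] at hs
  omega

lemma sum_range_eq_sum_fin_mul_ite {n t : ℕ} (ht : t ≤ n) (f : ℕ → ℕ) :
    ∑ s ∈ range t, f s = ∑ s : Fin n, (if (s : ℕ) < t then 1 else 0) * f s := by
  rw [Fin.sum_univ_eq_sum_range (fun s => (if s < t then 1 else 0) * f s),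
    ← sum_range_add_sum_Ico _ ht, sum_eq_zero (s := Ico t n) fun s hs => by
      simp [(mem_Ico.1 hs).1.not_gt], add_zero]
  exact sum_congr rfl fun s hs => by simp [mem_range.1 hs]

def IsTransfer {ι : Type*} [DecidableEq ι] (y y' : ι → ℕ) (i j : ι) : Prop :=
  ∀ t, y' t + (Pi.single i 1 : ι → ℕ) t = y t + (Pi.single j 1 : ι → ℕ) t

lemma IsTransfer.trans {ι : Type*} [DecidableEq ι] {y y₁ y₂ : ι → ℕ} {i c j : ι}
    (h₁ : IsTransfer y y₁ i c) (h₂ : IsTransfer y₁ y₂ c j) : IsTransfer y y₂ i j := fun t => by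
  have := h₁ t; have := h₂ t; omega

lemma IsTransfer.sum_range_add {y y' : ℕ → ℕ} {i j : ℕ} (h : IsTransfer y y' i j) (t : ℕ) :
    ∑ s ∈ range t, y' s + (if i < t then 1 else 0) =
      ∑ s ∈ range t, y s + (if j < t then 1 else 0) := by
  have := sum_congr rfl fun s (_ : s ∈ range t) => h s
  simpa [sum_add_distrib, sum_pi_single'] using this

def parts (n : ℕ) (w : ℕ → ℕ) : Multiset ℕ := ∑ s : Fin n, {w s}

def IsFilling (n d : ℕ) (w : ℕ → ℕ) (M : Fin n → Multiset ℕ) : Prop :=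
  (∀ t, Multiset.card (M t) = d) ∧ ∑ t, M t = d • parts n w

section Filling

variable {n d : ℕ} {w : ℕ → ℕ} {M : Fin n → Multiset ℕ}

lemma mem_parts {a : ℕ} : a ∈ parts n w ↔ ∃ s : Fin n, w s = a := by
  simp [parts, Multiset.mem_sum, eq_comm]

lemma card_filter_parts (p : ℕ → Prop) [DecidablePred p] :
    Multiset.card ((parts n w).filter p) = #(univ.filter fun s : Fin n => p (w s)) := by
  rw [← Multiset.countP_eq_card_filter, ← Multiset.coe_countPAddMonoidHom, parts, map_sum,
    Finset.card_filter]
  simp [← Multiset.cons_zero, Multiset.countP_cons]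

lemma mem_parts_of_le (hw : Antitone w) (hstep : ∀ i, i + 1 < n → w i ≤ w (i + 1) + 1)
    {a b r : ℕ} (ha : a ∈ parts n w) (hb : b ∈ parts n w) (hbr : b ≤ r) (hra : r ≤ a) :
    r ∈ parts n w := by
  obtain ⟨s, rfl⟩ := mem_parts.1 ha
  obtain ⟨s', rfl⟩ := mem_parts.1 hb
  rcases le_or_gt (s : ℕ) s' with hss' | hss'
  · obtain ⟨i, -, hi, rfl⟩ :=
      exists_eq_of_drop_le_one hss' (fun i _ hi => hstep i (by omega)) hbr hra
    exact mem_parts.2 ⟨⟨i, by omega⟩, rfl⟩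
  · rwa [le_antisymm hra ((hw hss'.le).trans hbr)]

lemma isFilling_replicate (n d : ℕ) (w : ℕ → ℕ) :
    IsFilling n d w fun t => Multiset.replicate d (w t) :=
  ⟨fun _ => Multiset.card_replicate _ _, by
    simp [parts, ← Multiset.nsmul_singleton, Finset.smul_sum]⟩

lemma IsFilling.mem_parts (hM : IsFilling n d w M) {t : Fin n} {a : ℕ} (ha : a ∈ M t) :
    a ∈ parts n w := by
  have : a ∈ ∑ t, M t := Multiset.mem_sum.2 ⟨t, mem_univ _, ha⟩
  rw [hM.2] at this
  exact (Multiset.mem_nsmul.1 this).2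

lemma IsFilling.card_le_card_biUnion (hM : IsFilling n (d + 1) w M) (S : Finset (Fin n)) :
    #S ≤ #(S.biUnion fun t => univ.filter fun s : Fin n => w s ∈ M t) := by
  set U := ∑ t ∈ S, M t
  have hbiUnion : (S.biUnion fun t => univ.filter fun s : Fin n => w s ∈ M t) =
      univ.filter fun s : Fin n => w s ∈ U := by
    ext s; simp [U, Multiset.mem_sum]
  have hle : U ≤ (d + 1) • parts n w := hM.2 ▸ sum_le_sum_of_subset (subset_univ S)
  have key : (d + 1) * #S ≤ (d + 1) * #(univ.filter fun s : Fin n => w s ∈ U) :=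
    calc (d + 1) * #S = Multiset.card (U.filter (· ∈ U)) := by
          rw [Multiset.filter_eq_self.2 fun _ h => h, Multiset.card_sum]
          simp [hM.1, mul_comm]
      _ ≤ Multiset.card (((d + 1) • parts n w).filter (· ∈ U)) :=
          Multiset.card_le_card (Multiset.filter_le_filter _ hle)
      _ = (d + 1) * #(univ.filter fun s : Fin n => w s ∈ U) := by
          rw [Multiset.filter_nsmul, Multiset.card_nsmul, card_filter_parts]
  rw [hbiUnion]
  exact Nat.le_of_mul_le_mul_left key d.succ_pos

theorem IsFilling.exists_perm_sum (hM : IsFilling n d w M) :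
    ∃ σ : Fin d → Equiv.Perm (Fin n), ∀ t, (M t).sum = ∑ j, w (σ j t) := by
  induction d generalizing M with
  | zero => exact ⟨Fin.elim0, fun t => by simp [Multiset.card_eq_zero.1 (hM.1 t)]⟩
  | succ d ih =>
    obtain ⟨f, hf_inj, hf⟩ :=
      (all_card_le_biUnion_card_iff_existsInjective' _).1 hM.card_le_card_biUnion
    simp only [mem_filter, mem_univ, true_and] at hf
    have hf_bij : Function.Bijective f := hf_inj.bijective_of_finite
    set M' : Fin n → Multiset ℕ := fun t => (M t).erase (w (f t))
    have hM' : IsFilling n d w M' := by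
      refine ⟨fun t => by simp [M', Multiset.card_erase_of_mem (hf t), hM.1 t], ?_⟩
      have hsum : ∑ t, M' t + parts n w = ∑ t, M t := by
        rw [parts, ← Equiv.sum_comp (Equiv.ofBijective f hf_bij) fun s => {w s},
          ← sum_add_distrib]
        refine sum_congr rfl fun t _ => ?_
        rw [add_comm, Equiv.ofBijective_apply, Multiset.singleton_add, Multiset.cons_erase (hf t)]
      rw [hM.2, succ_nsmul] at hsum
      exact add_right_cancel hsum
    obtain ⟨σ, hσ⟩ := ih hM'
    refine ⟨Fin.cons (Equiv.ofBijective f hf_bij) σ, fun t => ?_⟩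
    rw [Fin.sum_univ_succ, Fin.cons_zero, ← Multiset.sum_erase (hf t)]
    simp [M', hσ]

lemma IsFilling.exists_two_le_count (hM : IsFilling n d w M) (hd : n < d) {r : ℕ}
    (hr : r ∈ parts n w) : ∃ c, 2 ≤ (M c).count r := by
  have hlt : ∑ _c : Fin n, 1 < ∑ c, (M c).count r := by
    rw [← Multiset.count_sum', hM.2, Multiset.count_nsmul]
    simpa using hd.trans_le (Nat.le_mul_of_pos_right d (Multiset.count_pos.2 hr))
  obtain ⟨c, -, hc⟩ := exists_lt_of_sum_lt hlt
  exact ⟨c, hc⟩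

lemma IsFilling.swap (hM : IsFilling n d w M) {i c : Fin n} (hic : i ≠ c) {a b : ℕ}
    (ha : a ∈ M i) (hb : b ∈ M c) :
    IsFilling n d w
      (Function.update (Function.update M i (b ::ₘ (M i).erase a)) c (a ::ₘ (M c).erase b)) := by
  refine ⟨fun t => ?_, ?_⟩
  · simp only [Function.update_apply]
    split_ifs with htc hti
    · rw [Multiset.card_cons, Multiset.card_erase_add_one (htc ▸ hb), hM.1]
    · rw [Multiset.card_cons, Multiset.card_erase_add_one (hti ▸ ha), hM.1]
    · exact hM.1 t
  · have hswap : (b ::ₘ (M i).erase a) + (a ::ₘ (M c).erase b) = M i + M c :=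
      calc _ = (a ::ₘ (M i).erase a) + (b ::ₘ (M c).erase b) := by
            simp only [← Multiset.singleton_add]; abel
        _ = M i + M c := by rw [Multiset.cons_erase ha, Multiset.cons_erase hb]
    have hi : i ∈ (univ : Finset (Fin n)) \ {c} := by simpa using hic
    rw [← hM.2, sum_update_of_mem (mem_univ c), sum_update_of_mem hi,
      sum_eq_add_sum_sdiff_singleton_of_mem (mem_univ c), sum_eq_add_sum_sdiff_singleton_of_mem hi,
      add_left_comm, ← add_assoc, hswap, add_comm (M i), add_assoc]

lemma isTransfer_update_swap_succ {i c : Fin n} (hic : i ≠ c) {b : ℕ} (ha : b + 1 ∈ M i)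
    (hb : b ∈ M c) :
    IsTransfer (fun t => (M t).sum) (fun t => (Function.update (Function.update M i
      (b ::ₘ (M i).erase (b + 1))) c ((b + 1) ::ₘ (M c).erase b) t).sum) i c := by
  intro t
  have hsa := Multiset.sum_erase ha
  have hsb := Multiset.sum_erase hb
  simp only [Function.update_apply, Pi.single_apply]
  split_ifs with htc hti hti <;> subst_vars <;> simp_all only [Multiset.sum_cons] <;> omega

theorem IsFilling.exists_transfer_of_mem (hM : IsFilling n d w M) (hw : Antitone w)
    (hstep : ∀ i, i + 1 < n → w i ≤ w (i + 1) + 1) (hd : n < d) {i j : Fin n} (hij : i ≠ j)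
    {a b : ℕ} (ha : a ∈ M i) (hb : b ∈ M j) (hba : b < a) :
    ∃ M', IsFilling n d w M' ∧ IsTransfer (fun t => (M t).sum) (fun t => (M' t).sum) i j := by
  obtain ⟨k, rfl⟩ := Nat.exists_eq_add_of_lt hba
  induction k generalizing M i with
  | zero => exact ⟨_, hM.swap hij ha hb, isTransfer_update_swap_succ hij ha hb⟩
  | succ k ih =>
    set r := b + k + 1
    have hr : r ∈ parts n w :=
      mem_parts_of_le hw hstep (hM.mem_parts ha) (hM.mem_parts hb) (by omega) (by omega)
    obtain ⟨c, hc⟩ := hM.exists_two_le_count hd hr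
    have hrc : r ∈ M c := Multiset.count_pos.1 (by omega)
    rcases eq_or_ne c j with rfl | hcj
    · exact ⟨_, hM.swap hij ha hrc, isTransfer_update_swap_succ hij ha hrc⟩
    rcases eq_or_ne i c with rfl | hic
    · exact ih hM hij hb hrc (by omega)
    -- Swap `r + 1` in column `i` with `r` in column `c`, then continue from the other `r` in `c`.
    have hrc' : r ∈ (M c).erase r :=
      Multiset.count_pos.1 (by rw [Multiset.count_erase_self]; omega)
    obtain ⟨M', hM', hsum⟩ := ih (hM.swap hic ha hrc) hcj
      (by simpa [hij.symm, hcj.symm] using hb) (by simp [hrc']) (by omega)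
    exact ⟨M', hM', (isTransfer_update_swap_succ hic ha hrc).trans hsum⟩

theorem IsFilling.exists_transfer (hM : IsFilling n d w M) (hw : Antitone w)
    (hstep : ∀ i, i + 1 < n → w i ≤ w (i + 1) + 1) (hd : n < d) {i j : Fin n} (hij : i ≠ j)
    (hlt : (M j).sum < (M i).sum) :
    ∃ M', IsFilling n d w M' ∧ IsTransfer (fun t => (M t).sum) (fun t => (M' t).sum) i j := by
  obtain ⟨a, ha, b, hb, hba⟩ :=
    Multiset.exists_lt_of_sum_lt_of_card_eq ((hM.1 j).trans (hM.1 i).symm) hlt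
  exact hM.exists_transfer_of_mem hw hstep hd hij ha hb hba

end Filling

def IsDominatedBy (n : ℕ) (B v : ℕ → ℕ) : Prop :=
  PartitionOn n B ∧ (∀ t ≤ n, ∑ s ∈ range t, B s ≤ ∑ s ∈ range t, v s) ∧
    ∑ s ∈ range n, B s = ∑ s ∈ range n, v s

def dominanceGap (n : ℕ) (B v : ℕ → ℕ) : ℕ :=
  ∑ t ∈ range n, (∑ s ∈ range t, v s - ∑ s ∈ range t, B s)

section Dominance

variable {n : ℕ} {B v : ℕ → ℕ}

lemma isDominatedBy_iff :
    IsDominatedBy n B v ↔ PartitionOn n B ∧ ∑ s ∈ range n, B s = ∑ s ∈ range n, v s ∧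
      ∀ i < n, ∑ s ∈ Ico i n, v s ≤ ∑ s ∈ Ico i n, B s := by
  refine ⟨fun ⟨hB, hdom, htot⟩ => ⟨hB, htot, fun i hi => ?_⟩,
    fun ⟨hB, htot, htail⟩ => ⟨hB, fun t ht => ?_, htot⟩⟩
  · have := hdom i hi.le
    rw [← sum_range_add_sum_Ico _ hi.le, ← sum_range_add_sum_Ico v hi.le] at htot
    omega
  · rcases ht.lt_or_eq with ht | rfl
    · have := htail t ht
      rw [← sum_range_add_sum_Ico _ ht.le, ← sum_range_add_sum_Ico v ht.le] at htot
      omega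
    · exact htot.le

lemma isDominatedBy_of_mem_XwPow {d : ℕ} {w : ℕ → ℕ} (hw : Antitone w) (hB : B ∈ XwPow n d w) :
    IsDominatedBy n B fun s => d * w s := by
  obtain ⟨hBpart, σ, hσ⟩ := hB
  have hhead : ∀ t ≤ n, ∑ s ∈ range t, B s =
      ∑ j, ∑ s : Fin n, (if (s : ℕ) < t then 1 else 0) * w (σ j s) := fun t ht => by
    rw [sum_range_eq_sum_fin_mul_ite ht]
    simp_rw [hσ, mul_sum]
    exact sum_comm
  refine ⟨hBpart, fun t ht => ?_, ?_⟩
  · have hmono : Monovary (fun s : Fin n => if (s : ℕ) < t then 1 else 0) fun s => w s :=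
      Antitone.monovary (fun a b h => by split_ifs <;> omega) fun a b h => hw h
    calc ∑ s ∈ range t, B s
        ≤ ∑ _j : Fin d, ∑ s : Fin n, (if (s : ℕ) < t then 1 else 0) * w s := by
          rw [hhead t ht]
          exact sum_le_sum fun j _ => hmono.sum_mul_comp_perm_le_sum_mul
      _ = ∑ s ∈ range t, d * w s := by
          rw [sum_const, card_univ, Fintype.card_fin, smul_eq_mul, ← mul_sum,
            ← sum_range_eq_sum_fin_mul_ite ht]
  · rw [hhead n le_rfl, ← mul_sum]
    simp [Equiv.sum_comp (σ _) fun s => w s, Fin.sum_univ_eq_sum_range]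

lemma IsDominatedBy.exists_transfer_indices (hv : Antitone v) (hB : IsDominatedBy n B v)
    (hne : ∃ s < n, B s ≠ v s) :
    ∃ i q, i < q ∧ q < n ∧ (∀ s, s + 1 = i → B i < B s) ∧ B (q + 1) < B q ∧
      ∀ t, i < t → t ≤ q → ∑ s ∈ range t, B s < ∑ s ∈ range t, v s := by
  obtain ⟨hBpart, hdom, htot⟩ := hB
  have hex : ∃ s, B s ≠ v s := hne.imp fun _ h => h.2
  set i := Nat.find hex
  have hi : i < n := by obtain ⟨s, hs, hs'⟩ := hne; exact (Nat.find_min' hex hs').trans_lt hs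
  have hbefore : ∀ s < i, B s = v s := fun s hs => not_not.1 (Nat.find_min hex hs)
  have hheadi : ∑ s ∈ range i, B s = ∑ s ∈ range i, v s :=
    sum_congr rfl fun s hs => hbefore s (mem_range.1 hs)
  have hBi : B i < v i := by
    have := hdom (i + 1) hi
    rw [sum_range_succ, sum_range_succ] at this
    exact lt_of_le_of_ne (by omega) (Nat.find_spec hex)
  -- `p` will be `q + 1`: the first position after `i` where the partial sums agree again.
  obtain ⟨p, ⟨hip, hp⟩, hpn, hpmin⟩ : ∃ p, (i < p ∧ ∑ s ∈ range p, B s = ∑ s ∈ range p, v s) ∧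
      p ≤ n ∧ ∀ t < p, ¬(i < t ∧ ∑ s ∈ range t, B s = ∑ s ∈ range t, v s) := by
    have hex' : ∃ t, i < t ∧ ∑ s ∈ range t, B s = ∑ s ∈ range t, v s := ⟨n, hi, htot⟩
    exact ⟨_, Nat.find_spec hex', Nat.find_min' hex' ⟨hi, htot⟩, fun t => Nat.find_min hex'⟩
  have hstrict : ∀ t, i < t → t < p → ∑ s ∈ range t, B s < ∑ s ∈ range t, v s :=
    fun t hit htp => lt_of_le_of_ne (hdom t (by omega)) fun h => hpmin t htp ⟨hit, h⟩
  have hip' : i + 1 < p := by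
    refine lt_of_le_of_ne hip fun h => ?_
    subst h
    rw [sum_range_succ, sum_range_succ] at hp
    omega
  obtain ⟨q, rfl⟩ : ∃ q, p = q + 1 := ⟨p - 1, by omega⟩
  have hBp : B (q + 1) ≤ v (q + 1) := by
    rcases hpn.lt_or_eq with hpn | hpn
    · have := hdom (q + 2) hpn
      rw [sum_range_succ B (q + 1), sum_range_succ v (q + 1)] at this
      omega
    · rw [hBpart.2 _ hpn.ge]; exact Nat.zero_le _
  have hBq : v q < B q := by
    have := hstrict q (by omega) (by omega)
    rw [sum_range_succ, sum_range_succ] at hp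
    omega
  refine ⟨i, q, by omega, by omega, fun s hs => ?_, by have := hv (by omega : q ≤ q + 1); omega,
    fun t hit htq => hstrict t hit (by omega)⟩
  rw [hbefore s (by omega)]
  exact hBi.trans_le (hv (by omega))

lemma IsDominatedBy.exists_transfer (hB : IsDominatedBy n B v) {i q : ℕ} (hiq : i < q)
    (hqn : q < n) (hi : ∀ s, s + 1 = i → B i < B s) (hq : B (q + 1) < B q)
    (hstrict : ∀ t, i < t → t ≤ q → ∑ s ∈ range t, B s < ∑ s ∈ range t, v s) :
    ∃ B', IsDominatedBy n B' v ∧ IsTransfer B' B i q ∧ B' q < B' i ∧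
      dominanceGap n B' v < dominanceGap n B v := by
  obtain ⟨hBpart, hdom, htot⟩ := hB
  have hBanti : Antitone B := fun a b h => hBpart.1 a b h
  set B' : ℕ → ℕ := fun s => B s + (Pi.single i 1 : ℕ → ℕ) s - (Pi.single q 1 : ℕ → ℕ) s
  have hT : IsTransfer B' B i q := fun s => by
    simp only [B', Pi.single_apply]; split_ifs <;> subst_vars <;> omega
  have hH := hT.sum_range_add
  have hgap_le : ∀ t ∈ range n, ∑ s ∈ range t, v s - ∑ s ∈ range t, B' s ≤
      ∑ s ∈ range t, v s - ∑ s ∈ range t, B s := fun t _ => by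
    have := hH t; split_ifs at this <;> omega
  refine ⟨B', ⟨⟨antitone_nat_of_succ_le fun s => ?_, fun s hs => ?_⟩, fun t ht => ?_, ?_⟩, hT,
    ?_, sum_lt_sum hgap_le ⟨q, mem_range.2 hqn, ?_⟩⟩
  · have := hBanti (by omega : s ≤ s + 1)
    have := hi s
    simp only [B', Pi.single_apply]; split_ifs <;> subst_vars <;> omega
  · simp only [B', Pi.single_apply, if_neg (by omega : s ≠ i), if_neg (by omega : s ≠ q)]
    simpa using hBpart.2 s hs
  · have := hH t
    have := hdom t ht
    have := hstrict t
    split_ifs at * <;> omega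
  · have := hH n; simp only [if_pos (hiq.trans hqn), if_pos hqn] at this; omega
  · have := hBanti hiq.le
    simp only [B', Pi.single_apply]; split_ifs <;> omega
  · have := hH q
    have := hstrict q hiq le_rfl
    simp only [if_pos hiq, lt_irrefl, if_false] at *
    omega

end Dominance

theorem exists_isFilling_of_isDominatedBy {n d : ℕ} {w : ℕ → ℕ} (hw : Antitone w)
    (hstep : ∀ i, i + 1 < n → w i ≤ w (i + 1) + 1) (hd : n < d) {B : ℕ → ℕ}
    (hB : IsDominatedBy n B fun s => d * w s) :
    ∃ M, IsFilling n d w M ∧ ∀ t : Fin n, (M t).sum = B t := by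
  induction hg : dominanceGap n B (fun s => d * w s) using Nat.strong_induction_on
    generalizing B with
  | _ g ih =>
  by_cases hne : ∃ s < n, B s ≠ d * w s
  · obtain ⟨i, q, hiq, hqn, hi, hq, hstrict⟩ :=
      hB.exists_transfer_indices (fun a b h => Nat.mul_le_mul_left d (hw h)) hne
    obtain ⟨B', hB', hT, hlt, hgap⟩ := hB.exists_transfer hiq hqn hi hq hstrict
    obtain ⟨M', hM', hsum'⟩ := ih _ (hg ▸ hgap) hB' rfl
    obtain ⟨M, hM, hTM⟩ := hM'.exists_transfer hw hstep hd (i := ⟨i, hiq.trans hqn⟩)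
      (j := ⟨q, hqn⟩) (by simp [Fin.ext_iff]; omega) (by simpa [hsum'] using hlt)
    refine ⟨M, hM, fun t => ?_⟩
    have h₁ := hTM t
    have h₂ := hT t
    simp only [hsum', Pi.single_apply, Fin.ext_iff] at h₁ h₂
    omega
  · push Not at hne
    exact ⟨_, isFilling_replicate n d w, fun t => by simp [hne t t.isLt]⟩

theorem stmt_15_general (n : ℕ) (w : ℕ → ℕ) (hw : PartitionOn n w)
    (hstep : ∀ i, i + 1 < n → w i ≤ w (i + 1) + 1) :
    ∃ D : ℕ, ∀ d, D ≤ d →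
      XwPow n d w = { C | PartitionOn n C ∧ psize n C = d * psize n w ∧
        ∀ i < n, d * (∑ j ∈ Finset.Ico i n, w j) ≤ ∑ j ∈ Finset.Ico i n, C j } := by
  have hw' : Antitone w := fun a b h => hw.1 a b h
  refine ⟨n + 1, fun d hd => Set.ext fun C => ?_⟩
  simp only [Set.mem_ofPred_eq, psize, mul_sum, ← isDominatedBy_iff]
  refine ⟨isDominatedBy_of_mem_XwPow hw', fun hC => ?_⟩
  obtain ⟨M, hM, hMC⟩ := exists_isFilling_of_isDominatedBy hw' hstep hd hC
  obtain ⟨σ, hσ⟩ := hM.exists_perm_sum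
  exact ⟨hC.1, σ, fun t => (hMC t).symm.trans (hσ t)⟩

theorem stmt_15 (n : ℕ) (w : ℕ → ℕ) (hw : PartitionOn n w) (hw0 : ∃ i, w i ≠ 0)
    (hstep : ∀ i, i + 1 < n → w i ≤ w (i + 1) + 1) :
    ∃ D : ℕ, ∀ d, D ≤ d →
      XwPow n d w = { C | PartitionOn n C ∧ psize n C = d * psize n w ∧
        ∀ i < n, d * (∑ j ∈ Finset.Ico i n, w j) ≤ ∑ j ∈ Finset.Ico i n, C j } :=
  stmt_15_general n w hw hstep
end

section
/- Let 1 ≤ p ≤ n and let Y ⊆ P_n be a set of partitions containing (1^p). Then every (z,l) ∈ Z(Y) satisfies z_p = 0, i.e. z has at most p−1 nonzero parts. -/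
open MvPolynomial

/-! If `z_p ≥ 1`, then `c = z_1 ≥ 1` and every one of the first `p` parts of `z` is positive,
so `(1^p)(c) ≤ z` while `(1^p)'_{c+1} = 0 < l + 1`, contradicting condition (2) of `Z(Y)`. -/

theorem trunc_le_self (x : ℕ → ℕ) (c : ℕ) : trunc x c ≤ x :=
  fun _ => min_le_left _ _

theorem rect_le_iff {a b : ℕ} {z : ℕ → ℕ} : rect a b ≤ z ↔ ∀ i < a, b ≤ z i := by
  refine ⟨fun h i hi => by simpa [rect, hi] using h i, fun h i => ?_⟩
  unfold rect
  split_ifs with hi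
  exacts [h i hi, Nat.zero_le _]

theorem conj_rect_of_lt {a b i : ℕ} (h : b < i) : conj (rect a b) i = 0 := by
  have hempty : {j : ℕ | i ≤ rect a b j} = ∅ := by
    refine Set.eq_empty_iff_forall_notMem.2 fun j (hj : i ≤ rect a b j) => ?_
    unfold rect at hj
    split_ifs at hj <;> omega
  rw [conj, hempty, Set.ncard_empty]

theorem PartitionOn.one_le_of_lt {n p : ℕ} {z : ℕ → ℕ} (hz : PartitionOn n z)
    (hzp : z (p - 1) ≠ 0) {i : ℕ} (hi : i < p) : 1 ≤ z i :=
  (Nat.one_le_iff_ne_zero.2 hzp).trans (hz.1 i (p - 1) (by omega))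

theorem not_trunc_le_of_mem_ZX {n : ℕ} {X : Set (ℕ → ℕ)} {z : ℕ → ℕ} {l : ℕ}
    (hzl : (z, l) ∈ ZX n X) {x : ℕ → ℕ} (hx : x ∈ X) (hconj : conj x (z 0 + 1) = 0) :
    ¬ trunc x (z 0) ≤ z := fun hle => by
  obtain ⟨-, -, hall⟩ := hzl
  dsimp only at hall
  have := hall x hx hle (by omega)
  omega

theorem stmt_16_general (n p : ℕ)
    (Y : Set (ℕ → ℕ)) (hmem : rect p 1 ∈ Y) :
    ∀ zl ∈ ZX n Y, zl.1 (p - 1) = 0 := by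
  rintro ⟨z, l⟩ hzl
  change z (p - 1) = 0
  by_contra hzp
  have hz : PartitionOn n z := hzl.1
  have hc : 1 < z 0 + 1 := by
    have := hz.1 0 (p - 1) (Nat.zero_le _)
    omega
  exact not_trunc_le_of_mem_ZX hzl hmem (conj_rect_of_lt hc)
    ((trunc_le_self _ _).trans (rect_le_iff.2 fun i hi => hz.one_le_of_lt hzp hi))

theorem stmt_16 (n p : ℕ) (hp : 1 ≤ p) (hpn : p ≤ n)
    (Y : Set (ℕ → ℕ)) (hY : ∀ x ∈ Y, PartitionOn n x) (hmem : rect p 1 ∈ Y) :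
    ∀ zl ∈ ZX n Y, zl.1 (p - 1) = 0 :=
  stmt_16_general n p Y hmem
end

section
/- Let Y be a set of partitions containing (1^p) for some p ≥ 1. For all integers n' ≥ n ≥ p, identifying P_n with a subset of P_{n'} by appending zeros, one has Z(Y_n) = Z(Y_{n'}); in particular, every (z,l) ∈ Z(Y_{n'}) has z with at most p−1 nonzero parts, and Z(Y_n) is independent of n for n ≥ p. -/
open MvPolynomial

/-!
The rectangle `(1^p) ∈ Y` is tested by condition (2) of every `(z, l) ∈ Z(Y_m)`, `m ≥ p`.
If `z_1 ≥ 1` this forces `z_p = 0`, so every `x` with `x(z_1) ≤ z` has fewer than `p` parts;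
if `z_1 = 0` it forces `l + 1 ≤ p`, so every `x` with `x'_1 ≤ l + 1` has at most `p` parts.
Hence the partitions of `Y` that conditions (1) and (2) look at all lie in `Y_p`, and
`Z(Y_m) = Z(Y_p)`.
-/

lemma PartitionOn.mono {n m : ℕ} {z : ℕ → ℕ} (hz : PartitionOn n z) (hnm : n ≤ m) :
    PartitionOn m z :=
  ⟨hz.1, fun i hi => hz.2 i (hnm.trans hi)⟩

lemma conj_rect (a b : ℕ) {t : ℕ} (ht : 0 < t) :
    conj (rect a b) t = if t ≤ b then a else 0 := by
  split_ifs with htb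
  · have : {j : ℕ | t ≤ rect a b j} = Set.Iio a := by
      ext j
      simp only [Set.mem_ofPred_eq, Set.mem_Iio, rect]
      split <;> omega
    rw [conj, this, Set.ncard_Iio_nat]
  · have : {j : ℕ | t ≤ rect a b j} = ∅ := by
      ext j
      simp only [Set.mem_ofPred_eq, Set.mem_empty_iff_false, iff_false, rect]
      split <;> omega
    rw [conj, this, Set.ncard_empty]

lemma IsPartitionF.eq_zero_of_conj_one_le {x : ℕ → ℕ} (hx : IsPartitionF x) {m : ℕ}
    (hm : conj x 1 ≤ m) {i : ℕ} (hi : m ≤ i) : x i = 0 := by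
  obtain ⟨hdec, N, hN⟩ := hx
  by_contra hxi
  have hfin : {j : ℕ | 1 ≤ x j}.Finite :=
    (Set.finite_Iio N).subset fun j hj => by
      by_contra hjN
      have := hN j (not_lt.mp hjN)
      simp_all
  have hsub : Set.Iic i ⊆ {j : ℕ | 1 ≤ x j} := fun j hj =>
    (Nat.one_le_iff_ne_zero.mpr hxi).trans (hdec j i hj)
  have := Set.ncard_le_ncard hsub hfin
  rw [Set.ncard_Iic_nat] at this
  simp only [conj] at hm
  omega

lemma mem_ZX_congr {n n' : ℕ} {X X' : Set (ℕ → ℕ)} {z : ℕ → ℕ} {l : ℕ}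
    (hz : PartitionOn n z ↔ PartitionOn n' z)
    (hX : ∀ x, trunc x (z 0) ≤ z → conj x (z 0 + 1) ≤ l + 1 → (x ∈ X ↔ x ∈ X')) :
    (z, l) ∈ ZX n X ↔ (z, l) ∈ ZX n' X' := by
  simp only [ZX, Set.mem_ofPred_eq, hz]
  refine and_congr_right fun _ => and_congr ?_ ?_
  · exact exists_congr fun x => ⟨fun ⟨hx, ht, hc⟩ => ⟨(hX x ht hc).1 hx, ht, hc⟩,
      fun ⟨hx, ht, hc⟩ => ⟨(hX x ht hc).2 hx, ht, hc⟩⟩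
  · exact forall_congr' fun x => ⟨fun h hx ht hc => h ((hX x ht hc).2 hx) ht hc,
      fun h hx ht hc => h ((hX x ht hc).1 hx) ht hc⟩

section restr

variable {Y : Set (ℕ → ℕ)} {p m : ℕ} {z : ℕ → ℕ} {l : ℕ}

lemma rect_one_mem_restr (hmem : rect p 1 ∈ Y) (hpm : p ≤ m) : rect p 1 ∈ restr Y m :=
  ⟨hmem, fun i hi => if_neg (by omega)⟩

/-- Once `z 0 ≥ 1`, condition (2) for `(1^p)`, whose column `z 0 + 1` is empty, forces
`(1^p)(z 0) ≰ z`, i.e. some part `z i` with `i < p` vanishes. -/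
lemma eq_zero_of_mem_ZX_restr (hmem : rect p 1 ∈ Y) (hpm : p ≤ m)
    (hzl : (z, l) ∈ ZX m (restr Y m)) {i : ℕ} (hi : p - 1 ≤ i) : z i = 0 := by
  obtain ⟨hz, -, hall⟩ := hzl
  dsimp only at hz hall
  obtain hz0 | hz0 := Nat.eq_zero_or_pos (z 0)
  · exact Nat.eq_zero_of_le_zero (hz0 ▸ hz.1 0 i (Nat.zero_le i))
  have hc : conj (rect p 1) (z 0 + 1) = 0 := by
    rw [conj_rect p 1 (Nat.succ_pos _), if_neg (by omega)]
  have hnot : ¬ trunc (rect p 1) (z 0) ≤ z := fun ht => by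
    have := hall _ (rect_one_mem_restr hmem hpm) ht (by omega)
    omega
  obtain ⟨j, hj⟩ : ∃ j, z j < trunc (rect p 1) (z 0) j := by simpa [Pi.le_def] using hnot
  have hjp : j < p := by by_contra h; simp [trunc, rect, h] at hj
  have hzj : z j = 0 := by simp only [trunc, rect, if_pos hjp] at hj; omega
  exact Nat.eq_zero_of_le_zero (hzj ▸ hz.1 j i (by omega))

lemma lt_of_mem_ZX_restr (hmem : rect p 1 ∈ Y) (hpm : p ≤ m)
    (hzl : (z, l) ∈ ZX m (restr Y m)) (hz0 : z 0 = 0) : l < p := by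
  by_contra! hpl
  have hc : conj (rect p 1) (z 0 + 1) = p := by
    rw [hz0, zero_add, conj_rect p 1 one_pos, if_pos le_rfl]
  have := hzl.2.2 _ (rect_one_mem_restr hmem hpm) (fun i => by simp [trunc, hz0])
    (by dsimp only; omega)
  dsimp only at this
  omega

lemma eq_zero_of_mem_ZX_restr_of_trunc_le (hY : ∀ x ∈ Y, IsPartitionF x) (hmem : rect p 1 ∈ Y)
    (hpm : p ≤ m) (hzl : (z, l) ∈ ZX m (restr Y m)) {x : ℕ → ℕ} (hx : x ∈ Y)
    (ht : trunc x (z 0) ≤ z) (hc : conj x (z 0 + 1) ≤ l + 1) {i : ℕ} (hi : p ≤ i) :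
    x i = 0 := by
  obtain hz0 | hz0 := Nat.eq_zero_or_pos (z 0)
  · have := lt_of_mem_ZX_restr hmem hpm hzl hz0
    rw [hz0, zero_add] at hc
    exact (hY x hx).eq_zero_of_conj_one_le (by omega) hi
  · have := ht i
    simp only [trunc, eq_zero_of_mem_ZX_restr hmem hpm hzl (i := i) (by omega)] at this
    omega

lemma ZX_restr_eq (hY : ∀ x ∈ Y, IsPartitionF x) (hmem : rect p 1 ∈ Y) (hpm : p ≤ m) :
    ZX m (restr Y m) = ZX p (restr Y p) := by
  ext ⟨z, l⟩
  suffices key : ∀ k, p ≤ k → (z, l) ∈ ZX k (restr Y k) →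
      ((z, l) ∈ ZX m (restr Y m) ↔ (z, l) ∈ ZX p (restr Y p)) from
    ⟨fun h => (key m hpm h).1 h, fun h => (key p le_rfl h).2 h⟩
  intro k hpk hzl
  refine mem_ZX_congr ⟨fun hz => ⟨hz.1, fun i hi => ?_⟩, (PartitionOn.mono · hpm)⟩ ?_
  · exact eq_zero_of_mem_ZX_restr hmem hpk hzl (by omega)
  · intro x ht hc
    refine ⟨fun hx => ⟨hx.1, fun i hi => ?_⟩, fun hx => ⟨hx.1, fun i hi => hx.2 i (hpm.trans hi)⟩⟩
    exact eq_zero_of_mem_ZX_restr_of_trunc_le hY hmem hpk hzl hx.1 ht hc hi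

end restr

theorem stmt_17_general (p : ℕ) (Y : Set (ℕ → ℕ)) (hY : ∀ x ∈ Y, IsPartitionF x)
    (hmem : rect p 1 ∈ Y) :
    ∀ n n' : ℕ, p ≤ n → n ≤ n' →
      ZX n (restr Y n) = ZX n' (restr Y n') ∧
        ∀ zl ∈ ZX n' (restr Y n'), ∀ i, p - 1 ≤ i → zl.1 i = 0 := by
  intro n n' hpn hnn'
  refine ⟨(ZX_restr_eq hY hmem hpn).trans (ZX_restr_eq hY hmem (hpn.trans hnn')).symm, ?_⟩
  rintro ⟨z, l⟩ hzl i hi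
  exact eq_zero_of_mem_ZX_restr hmem (hpn.trans hnn') hzl hi

theorem stmt_17 (p : ℕ) (hp : 1 ≤ p) (Y : Set (ℕ → ℕ)) (hY : ∀ x ∈ Y, IsPartitionF x)
    (hmem : rect p 1 ∈ Y) :
    ∀ n n' : ℕ, p ≤ n → n ≤ n' →
      ZX n (restr Y n) = ZX n' (restr Y n') ∧
        ∀ zl ∈ ZX n' (restr Y n'), ∀ i, p - 1 ≤ i → zl.1 i = 0 :=
  stmt_17_general p Y hY hmem
end

section
/- Let m ≥ 1 and w ≥ 1 be integers with n ≥ m. Let z ∈ P_n with z_m ≥ w−1, and let x ∈ P_n with at most m nonzero parts. Set c = z_1, d = c − (w−1), u = z − z(w−1) (i.e. u_i = max(z_i − (w−1), 0)), and y = x − x(w−1). Then x'_{c+1} = y'_{d+1}, and z ≥ x(c) if and only if u ≥ y(d). -/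
open MvPolynomial

lemma conj_tsub_add_one (x : ℕ → ℕ) {k c : ℕ} (hk : k ≤ c) :
    conj (fun i => x i - k) (c - k + 1) = conj x (c + 1) := by
  unfold conj
  congr 1
  ext j
  simp only [Set.mem_ofPred_eq]
  omega

lemma min_le_iff_min_tsub_le_tsub (a c : ℕ) {k b : ℕ} (hk : k ≤ b) :
    min a c ≤ b ↔ min (a - k) (c - k) ≤ b - k := by
  rw [Nat.sub_min_sub_right, tsub_le_tsub_iff_right hk]

lemma trunc_le_iff_trunc_tsub_le_tsub {x z : ℕ → ℕ} (c : ℕ) {k : ℕ}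
    (h : ∀ i, x i ≠ 0 → k ≤ z i) :
    trunc x c ≤ z ↔ trunc (fun i => x i - k) (c - k) ≤ fun i => z i - k := by
  refine forall_congr' fun i => ?_
  by_cases hxi : x i = 0
  · simp [trunc, hxi]
  · exact min_le_iff_min_tsub_le_tsub (x i) c (h i hxi)

theorem stmt_18_general (n m w : ℕ)
    (z : ℕ → ℕ) (hz : PartitionOn n z) (hzm : w - 1 ≤ z (m - 1))
    (x : ℕ → ℕ) (hxm : ∀ i, m ≤ i → x i = 0) :
    conj x (z 0 + 1) = conj (fun i => x i - (w - 1)) ((z 0 - (w - 1)) + 1) ∧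
      (trunc x (z 0) ≤ z ↔
        trunc (fun i => x i - (w - 1)) (z 0 - (w - 1)) ≤ (fun i => z i - (w - 1))) := by
  have hz_ge : ∀ i ≤ m - 1, w - 1 ≤ z i := fun i hi => hzm.trans (hz.1 i (m - 1) hi)
  refine ⟨(conj_tsub_add_one x (hz_ge 0 (Nat.zero_le _))).symm,
    trunc_le_iff_trunc_tsub_le_tsub (z 0) fun i hxi => hz_ge i ?_⟩
  by_contra hi
  exact hxi (hxm i (by omega))

theorem stmt_18 (n m w : ℕ) (hm : 1 ≤ m) (hw : 1 ≤ w) (hmn : m ≤ n)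
    (z : ℕ → ℕ) (hz : PartitionOn n z) (hzm : w - 1 ≤ z (m - 1))
    (x : ℕ → ℕ) (hx : PartitionOn n x) (hxm : ∀ i, m ≤ i → x i = 0) :
    conj x (z 0 + 1) = conj (fun i => x i - (w - 1)) ((z 0 - (w - 1)) + 1) ∧
      (trunc x (z 0) ≤ z ↔
        trunc (fun i => x i - (w - 1)) (z 0 - (w - 1)) ≤ (fun i => z i - (w - 1))) :=
  stmt_18_general n m w z hz hzm x hxm
end

section
/- Let X be a finite nonempty set of pairwise incomparable nonzero partitions (no two distinct x,y ∈ X satisfy x ≥ y componentwise). Define m = max{i : x_i ≠ 0 for some x ∈ X}, w = min{x_1 : x ∈ X}, W = max{x_1 : x ∈ X}, and Y = {x − x(w−1) : x ∈ X}. Let C = max{|u| + l + 1 : (u,l) ∈ Z(Y_m)}. Then: (1) max{|u| + l + 1 : (u,l) ∈ Z(Y_n)} = C for all n ≥ m; and (2) max{|z| + l + 1 : (z,l) ∈ Z(X_n)} = (w−1)·n + C for all n ≥ max(m, (m−1)·(W−w+2) − C). -/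
open MvPolynomial

/-!
Subtracting `w - 1` from every part matches the pairs `(z, l) ∈ Z(X_n)` whose first `m` parts
are all at least `w - 1` with pairs of `Z(Y_n)`, the value `|z| + l + 1` dropping by exactly
`(w - 1) n`. The element of `X` with first part `w` becomes a `0/1`-partition in `Y`, and this
forces every `(u, l) ∈ Z(Y_n)` to have `u` supported on the first `m` indices, so `Z(Y_n)` does
not depend on `n ≥ m`. Any other pair of `Z(X_n)` either has `z_1 < w - 1`, and then
`|z| + l + 1 ≤ (w - 1) n` outright, or has some `z_j < w - 1 ≤ z_1` with `l < j < m`; then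
`|z| ≤ j z_1 + (n - j) z_j` and `z_1 < W` keep the value below `(w - 1) n + C` as soon as
`n ≥ (m - 1)(W - w + 2) - C`.
-/

open Set

def shiftDown (c : ℕ) (x : ℕ → ℕ) : ℕ → ℕ := fun i => x i - c

def zValues (n : ℕ) (X : Set (ℕ → ℕ)) : Set ℕ :=
  {v | ∃ zl ∈ ZX n X, v = psize n zl.1 + zl.2 + 1}

def IsZPair (X : Set (ℕ → ℕ)) (z : ℕ → ℕ) (l : ℕ) : Prop :=
  (∃ x ∈ X, trunc x (z 0) ≤ z ∧ conj x (z 0 + 1) ≤ l + 1) ∧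
    ∀ x ∈ X, trunc x (z 0) ≤ z → conj x (z 0 + 1) ≤ l + 1 → conj x (z 0 + 1) = l + 1

lemma mem_ZX_iff {n : ℕ} {X : Set (ℕ → ℕ)} {z : ℕ → ℕ} {l : ℕ} :
    (z, l) ∈ ZX n X ↔ PartitionOn n z ∧ IsZPair X z l :=
  Iff.rfl

lemma PartitionOn.antitone {n : ℕ} {x : ℕ → ℕ} (hx : PartitionOn n x) : Antitone x :=
  fun i j hij => hx.1 i j hij

lemma conj_le_of_forall_lt {x : ℕ → ℕ} {m k : ℕ} (h : ∀ j, m ≤ j → x j < k) :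
    conj x k ≤ m :=
  calc conj x k ≤ (Iio m).ncard :=
        ncard_le_ncard (fun j hj => lt_of_not_ge fun hmj => (h j hmj).not_ge hj) (finite_Iio m)
    _ = m := ncard_Iio_nat m

lemma le_of_conj_eq_succ {x : ℕ → ℕ} (hx : Antitone x) {k l : ℕ} (hc : conj x k = l + 1) :
    k ≤ x l := by
  by_contra! hlt
  have := conj_le_of_forall_lt fun j (hj : l ≤ j) => (hx hj).trans_lt hlt
  omega

lemma conj_shiftDown (c k : ℕ) (x : ℕ → ℕ) :
    conj (shiftDown c x) (k + 1) = conj x (k + 1 + c) := by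
  simp only [conj, shiftDown]
  congr 1
  ext j
  simp only [mem_ofPred_eq]
  omega

lemma psize_eq_of_le {m n : ℕ} {x : ℕ → ℕ} (hmn : m ≤ n) (hx : ∀ i, m ≤ i → x i = 0) :
    psize n x = psize m x :=
  (Finset.sum_subset (Finset.range_subset_range.2 hmn)
    fun i _ hi => hx i (by simpa using hi)).symm

lemma psize_le_psize_shiftDown_add (n c : ℕ) (z : ℕ → ℕ) :
    psize n z ≤ psize n (shiftDown c z) + c * n := by
  calc psize n z ≤ ∑ i ∈ Finset.range n, (shiftDown c z i + c) :=
        Finset.sum_le_sum fun i _ => by simp only [shiftDown]; omega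
    _ = psize n (shiftDown c z) + c * n := by
        rw [Finset.sum_add_distrib, Finset.sum_const, Finset.card_range, smul_eq_mul, mul_comm]
        rfl

lemma psize_le_of_antitone {z : ℕ → ℕ} (hz : Antitone z) {j n : ℕ} (hjn : j ≤ n) :
    psize n z ≤ j * z 0 + (n - j) * z j := by
  unfold psize
  rw [← Finset.sum_range_add_sum_Ico _ hjn]
  gcongr
  · calc ∑ i ∈ Finset.range j, z i ≤ ∑ _i ∈ Finset.range j, z 0 :=
          Finset.sum_le_sum fun i _ => hz (Nat.zero_le i)
      _ = j * z 0 := by simp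
  · calc ∑ i ∈ Finset.Ico j n, z i ≤ ∑ _i ∈ Finset.Ico j n, z j :=
          Finset.sum_le_sum fun i hi => hz (Finset.mem_Ico.1 hi).1
      _ = (n - j) * z j := by simp

lemma restr_eq_self {Y : Set (ℕ → ℕ)} {m n : ℕ} (hY : ∀ y ∈ Y, ∀ i, m ≤ i → y i = 0)
    (hmn : m ≤ n) : restr Y n = Y :=
  sep_eq_self_iff_mem_true.2 fun y hy i hi => hY y hy i (hmn.trans hi)

lemma isZPair_shiftDown_iff {X : Set (ℕ → ℕ)} {m c l : ℕ} {z u : ℕ → ℕ}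
    (hXm : ∀ x ∈ X, ∀ i, m ≤ i → x i = 0) (hm : 0 < m) (hzu : ∀ i < m, z i = u i + c) :
    IsZPair (shiftDown c '' X) u l ↔ IsZPair X z l := by
  have key : ∀ x ∈ X, (trunc (shiftDown c x) (u 0) ≤ u ↔ trunc x (z 0) ≤ z) ∧
      conj (shiftDown c x) (u 0 + 1) = conj x (z 0 + 1) := by
    intro x hx
    refine ⟨forall_congr' fun i => ?_, by rw [conj_shiftDown, hzu 0 hm, add_right_comm]⟩
    simp only [trunc, shiftDown]
    have := hzu 0 hm
    by_cases hi : i < m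
    · have := hzu i hi
      omega
    · have := hXm x hx i (not_lt.1 hi)
      omega
  simp only [IsZPair, exists_mem_image, forall_mem_image]
  refine and_congr (exists_congr fun x => and_congr_right fun hx => ?_)
    (forall₂_congr fun x hx => ?_) <;> rw [(key x hx).1, (key x hx).2]

lemma eq_zero_of_mem_ZX {Y : Set (ℕ → ℕ)} {m n l : ℕ} {y₀ u : ℕ → ℕ} (hy₀ : y₀ ∈ Y)
    (hy₀_le : ∀ i, y₀ i ≤ 1) (hy₀_zero : ∀ i, m ≤ i → y₀ i = 0) (h : (u, l) ∈ ZX n Y)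
    (i : ℕ) (hi : m ≤ i) : u i = 0 := by
  obtain ⟨hu, -, hall⟩ := mem_ZX_iff.1 h
  replace hu := hu.antitone
  by_contra hui
  -- a part of `u` beyond index `m` forces `y₀(u₁) ≤ u` while `y₀'_{u₁+1} = 0`
  have htrunc : trunc y₀ (u 0) ≤ u := fun k => by
    by_cases hk : k < m
    · have := hu (hk.le.trans hi : k ≤ i)
      have := hy₀_le k
      simp only [trunc]
      omega
    · simp [trunc, hy₀_zero k (not_lt.1 hk)]
  have hconj : conj y₀ (u 0 + 1) = 0 := by
    have := conj_le_of_forall_lt (x := y₀) (m := 0) (k := u 0 + 1) fun j _ => by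
      have := hy₀_le j
      have := hu (Nat.zero_le i)
      omega
    omega
  have := hall y₀ hy₀ htrunc (by omega)
  omega

lemma ZX_eq_of_le {Y : Set (ℕ → ℕ)} {m n : ℕ} {y₀ : ℕ → ℕ}
    (hY : ∀ y ∈ Y, ∀ i, m ≤ i → y i = 0) (hy₀ : y₀ ∈ Y) (hy₀_le : ∀ i, y₀ i ≤ 1)
    (hmn : m ≤ n) : ZX n Y = ZX m Y := by
  ext ⟨u, l⟩
  refine ⟨fun h => ⟨⟨h.1.1, eq_zero_of_mem_ZX hy₀ hy₀_le (hY y₀ hy₀) h⟩, h.2⟩,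
    fun h => ⟨⟨h.1.1, fun i hi => h.1.2 i (hmn.trans hi)⟩, h.2⟩⟩

lemma zValues_eq_of_le {Y : Set (ℕ → ℕ)} {m n : ℕ} {y₀ : ℕ → ℕ}
    (hY : ∀ y ∈ Y, ∀ i, m ≤ i → y i = 0) (hy₀ : y₀ ∈ Y) (hy₀_le : ∀ i, y₀ i ≤ 1)
    (hmn : m ≤ n) : zValues n Y = zValues m Y := by
  ext v
  simp only [zValues, ZX_eq_of_le hY hy₀ hy₀_le hmn]
  refine exists_congr fun zl => and_congr_right fun h => ?_
  rw [psize_eq_of_le hmn h.1.2]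

lemma add_mul_mem_zValues {X : Set (ℕ → ℕ)} {m n c v : ℕ}
    (hXm : ∀ x ∈ X, ∀ i, m ≤ i → x i = 0) (hm : 0 < m) (hmn : m ≤ n)
    (hv : v ∈ zValues m (shiftDown c '' X)) : c * n + v ∈ zValues n X := by
  obtain ⟨⟨u, l⟩, h, rfl⟩ := hv
  obtain ⟨hu, hul⟩ := mem_ZX_iff.1 h
  let z : ℕ → ℕ := fun i => if i < n then u i + c else 0
  have hz : PartitionOn n z := by
    refine ⟨fun i j hij => ?_, fun i hi => if_neg (not_lt.2 hi)⟩
    have := hu.antitone hij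
    simp only [z]
    split_ifs <;> omega
  have hzl : IsZPair X z l :=
    (isZPair_shiftDown_iff hXm hm fun i hi => if_pos (hi.trans_le hmn)).1 hul
  have hsize : psize n z = psize n u + c * n := by
    simp only [psize, z]
    rw [Finset.sum_congr rfl fun i hi => if_pos (Finset.mem_range.1 hi), Finset.sum_add_distrib,
      Finset.sum_const, Finset.card_range, smul_eq_mul, mul_comm n c]
  refine ⟨(z, l), ⟨hz, hzl⟩, ?_⟩
  rw [hsize, psize_eq_of_le hmn hu.2]
  ring

section ZX

variable {X : Set (ℕ → ℕ)} {m n l : ℕ} {z : ℕ → ℕ}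

lemma exists_conj_eq_of_mem_ZX (h : (z, l) ∈ ZX n X) :
    ∃ x ∈ X, trunc x (z 0) ≤ z ∧ conj x (z 0 + 1) = l + 1 := by
  obtain ⟨-, ⟨x, hx, ht, hc⟩, hall⟩ := mem_ZX_iff.1 h
  exact ⟨x, hx, ht, hall x hx ht hc⟩

lemma snd_lt_of_mem_ZX (hXm : ∀ x ∈ X, ∀ i, m ≤ i → x i = 0) (h : (z, l) ∈ ZX n X) :
    l < m := by
  obtain ⟨x, hx, -, hc⟩ := exists_conj_eq_of_mem_ZX h
  rw [Nat.lt_iff_add_one_le, ← hc]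
  exact conj_le_of_forall_lt fun j hj => by simp [hXm x hx j hj]

lemma snd_lt_of_mem_ZX_of_lt (hXa : ∀ x ∈ X, Antitone x) (h : (z, l) ∈ ZX n X) {j : ℕ}
    (hj : z j < z 0) : l < j := by
  obtain ⟨x, hx, ht, hc⟩ := exists_conj_eq_of_mem_ZX h
  have hxl := le_of_conj_eq_succ (hXa x hx) hc
  have hzl := ht l
  simp only [trunc] at hzl
  by_contra! hjl
  have := (mem_ZX_iff.1 h).1.antitone hjl
  omega

lemma fst_zero_lt_of_mem_ZX {W : ℕ} (hXa : ∀ x ∈ X, Antitone x) (hXW : ∀ x ∈ X, x 0 ≤ W)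
    (h : (z, l) ∈ ZX n X) : z 0 < W := by
  obtain ⟨x, hx, -, hc⟩ := exists_conj_eq_of_mem_ZX h
  have := (le_of_conj_eq_succ (hXa x hx) hc).trans (hXa x hx (Nat.zero_le l))
  have := hXW x hx
  omega

lemma psize_add_le_mul_of_lt {c : ℕ} (hXm : ∀ x ∈ X, ∀ i, m ≤ i → x i = 0) (hmn : m ≤ n)
    (h : (z, l) ∈ ZX n X) (hz : z 0 < c) : psize n z + l + 1 ≤ c * n := by
  have hsize := psize_le_of_antitone (mem_ZX_iff.1 h).1.antitone (le_refl n)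
  have hl := snd_lt_of_mem_ZX hXm h
  have : n * z 0 + n ≤ c * n := by nlinarith
  simp only [Nat.sub_self, zero_mul, add_zero] at hsize
  omega

lemma psize_add_le_of_lt_of_le {W c j : ℕ} (hXa : ∀ x ∈ X, Antitone x)
    (hXW : ∀ x ∈ X, x 0 ≤ W) (hmn : m ≤ n) (h : (z, l) ∈ ZX n X) (hjm : j < m)
    (hzj : z j < c) (hz0 : c ≤ z 0) :
    psize n z + l + 1 ≤ (c - 1) * n + (m - 1) * (W + 1 - c) := by
  have hz := (mem_ZX_iff.1 h).1.antitone
  have hlj := snd_lt_of_mem_ZX_of_lt hXa h (hzj.trans_le hz0)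
  have hW := fst_zero_lt_of_mem_ZX hXa hXW h
  have hsize := psize_le_of_antitone hz (hjm.le.trans hmn)
  calc psize n z + l + 1 ≤ j * z 0 + (n - j) * z j + j := by omega
    _ ≤ j * (W - 1) + (n - j) * (c - 1) + j := by gcongr <;> omega
    _ = (c - 1) * n + j * (W + 1 - c) := by
        zify [(by omega : 1 ≤ W), (by omega : 1 ≤ c), (by omega : c ≤ W + 1),
          (by omega : j ≤ n)]
        ring
    _ ≤ (c - 1) * n + (m - 1) * (W + 1 - c) := by gcongr; omega

lemma shiftDown_mem_ZX {c : ℕ} (hXm : ∀ x ∈ X, ∀ i, m ≤ i → x i = 0) (hm : 0 < m)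
    (h : (z, l) ∈ ZX n X) (hzc : ∀ i < m, c ≤ z i) :
    (shiftDown c z, l) ∈ ZX n (shiftDown c '' X) := by
  obtain ⟨hz, hzl⟩ := mem_ZX_iff.1 h
  refine ⟨⟨fun i j hij => Nat.sub_le_sub_right (hz.1 i j hij) c,
    fun i hi => by simp [shiftDown, hz.2 i hi]⟩, (isZPair_shiftDown_iff hXm hm fun i hi => ?_).2 hzl⟩
  have := hzc i hi
  simp only [shiftDown]
  omega

lemma le_of_mem_zValues {W c C v : ℕ} (hXa : ∀ x ∈ X, Antitone x)
    (hXm : ∀ x ∈ X, ∀ i, m ≤ i → x i = 0) (hXW : ∀ x ∈ X, x 0 ≤ W) (hm : 0 < m) (hmn : m ≤ n)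
    (hC : C ∈ upperBounds (zValues n (shiftDown c '' X)))
    (hmW : (m - 1) * (W + 1 - c) ≤ n + C) (hv : v ∈ zValues n X) : v ≤ c * n + C := by
  obtain ⟨⟨z, l⟩, h, rfl⟩ := hv
  dsimp only
  by_cases hzc : ∀ i < m, c ≤ z i
  · have : psize n (shiftDown c z) + l + 1 ≤ C := hC ⟨_, shiftDown_mem_ZX hXm hm h hzc, rfl⟩
    have := psize_le_psize_shiftDown_add n c z
    omega
  push Not at hzc
  obtain ⟨j, hjm, hzj⟩ := hzc
  rcases lt_or_ge (z 0) c with hz0 | hz0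
  · have := psize_add_le_mul_of_lt hXm hmn h hz0
    omega
  · have := psize_add_le_of_lt_of_le hXa hXW hmn h hjm hzj hz0
    have : (c - 1) * n + n = c * n := by
      rw [Nat.sub_one_mul, Nat.sub_add_cancel (Nat.le_mul_of_pos_left n (by omega))]
    omega

end ZX

theorem stmt_19_general (Xs : Set (ℕ → ℕ))
    (hpart : ∀ x ∈ Xs, IsPartitionF x)
    (m w W C : ℕ) (hm0 : 1 ≤ m)
    (hm1 : ∀ x ∈ Xs, ∀ i, m ≤ i → x i = 0)
    (hw2 : ∃ x ∈ Xs, x 0 = w)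
    (hW1 : ∀ x ∈ Xs, x 0 ≤ W)
    (hC : IsGreatest { v : ℕ |
        ∃ zl ∈ ZX m (restr ((fun x => fun i => x i - (w - 1)) '' Xs) m),
          v = psize m zl.1 + zl.2 + 1 } C) :
    (∀ n, m ≤ n →
      IsGreatest { v : ℕ |
          ∃ zl ∈ ZX n (restr ((fun x => fun i => x i - (w - 1)) '' Xs) n),
            v = psize n zl.1 + zl.2 + 1 } C) ∧
    (∀ n, m ≤ n → (m - 1) * (W - w + 2) - C ≤ n →
      IsGreatest { v : ℕ | ∃ zl ∈ ZX n (restr Xs n), v = psize n zl.1 + zl.2 + 1 }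
        ((w - 1) * n + C)) := by
  obtain ⟨x₀, hx₀, hx₀w⟩ := hw2
  have hXa : ∀ x ∈ Xs, Antitone x := fun x hx => (hpart x hx).1
  have hYm : ∀ y ∈ shiftDown (w - 1) '' Xs, ∀ i, m ≤ i → y i = 0 :=
    forall_mem_image.2 fun x hx i hi => by simp [shiftDown, hm1 x hx i hi]
  -- `x₀` has first part `w`, so its shift has all parts at most `1`
  have hy₀ : ∀ i, shiftDown (w - 1) x₀ i ≤ 1 := fun i => by
    have := hXa x₀ hx₀ (Nat.zero_le i)
    simp only [shiftDown]
    omega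
  have hYvals : ∀ n, m ≤ n → zValues n (shiftDown (w - 1) '' Xs) =
      zValues m (shiftDown (w - 1) '' Xs) :=
    fun n hn => zValues_eq_of_le hYm (mem_image_of_mem _ hx₀) hy₀ hn
  have hCY : IsGreatest (zValues m (restr (shiftDown (w - 1) '' Xs) m)) C := hC
  rw [restr_eq_self hYm le_rfl] at hCY
  refine ⟨fun n hn => ?_, fun n hn hnC => ?_⟩
  · change IsGreatest (zValues n (restr (shiftDown (w - 1) '' Xs) n)) C
    rwa [restr_eq_self hYm hn, hYvals n hn]
  change IsGreatest (zValues n (restr Xs n)) _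
  rw [restr_eq_self hm1 hn]
  have hmW : (m - 1) * (W + 1 - (w - 1)) ≤ n + C :=
    calc (m - 1) * (W + 1 - (w - 1)) ≤ (m - 1) * (W - w + 2) := Nat.mul_le_mul_left _ (by omega)
      _ ≤ n + C := by omega
  exact ⟨add_mul_mem_zValues hm1 hm0 hn hCY.1,
    fun v hv => le_of_mem_zValues hXa hm1 hW1 hm0 hn (hYvals n hn ▸ hCY.2) hmW hv⟩

theorem stmt_19 (Xs : Set (ℕ → ℕ)) (hfin : Xs.Finite) (hne : Xs.Nonempty)
    (hpart : ∀ x ∈ Xs, IsPartitionF x) (hnz : ∀ x ∈ Xs, ∃ i, x i ≠ 0)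
    (hinc : ∀ x ∈ Xs, ∀ y ∈ Xs, x ≠ y → ¬ ∀ i, y i ≤ x i)
    (m w W C : ℕ) (hm0 : 1 ≤ m)
    (hm1 : ∀ x ∈ Xs, ∀ i, m ≤ i → x i = 0) (hm2 : ∃ x ∈ Xs, x (m - 1) ≠ 0)
    (hw1 : ∀ x ∈ Xs, w ≤ x 0) (hw2 : ∃ x ∈ Xs, x 0 = w)
    (hW1 : ∀ x ∈ Xs, x 0 ≤ W) (hW2 : ∃ x ∈ Xs, x 0 = W)
    (hC : IsGreatest { v : ℕ |
        ∃ zl ∈ ZX m (restr ((fun x => fun i => x i - (w - 1)) '' Xs) m),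
          v = psize m zl.1 + zl.2 + 1 } C) :
    (∀ n, m ≤ n →
      IsGreatest { v : ℕ |
          ∃ zl ∈ ZX n (restr ((fun x => fun i => x i - (w - 1)) '' Xs) n),
            v = psize n zl.1 + zl.2 + 1 } C) ∧
    (∀ n, m ≤ n → (m - 1) * (W - w + 2) - C ≤ n →
      IsGreatest { v : ℕ | ∃ zl ∈ ZX n (restr Xs n), v = psize n zl.1 + zl.2 + 1 }
        ((w - 1) * n + C)) :=
  stmt_19_general Xs hpart m w W C hm0 hm1 hw2 hW1 hC
end
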